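/- Let A be the deterministic parity tree automaton over Σ = {a, b} with states {q₀, q₁, ⊤}, initial state q₀, ranks rank(q₀) = rank(⊤) = 0 and rank(q₁) = 1, and transitions δ(q₀,a) = (q₀,q₁), δ(q₀,b) = (⊤,⊤), δ(q₁,a) = (q₀,⊤), δ(q₁,b) = (⊤,⊤), δ(⊤,x) = (⊤,⊤) for all x ∈ {a,b}. Then L(A) is Π¹₁-complete: L(A) is Π¹₁ in T_Σ, and every Π¹₁ subset of the Cantor space {0,1}^ℕ Wadge-reduces to L(A). -/

import Mathlib

open Filter

/-- A deterministic parity tree automaton over alphabet `Alpha` with state set `Q`. -/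
structure DPTA (Alpha : Type) (Q : Type) where
  init : Q
  delta : Q → Alpha → Q × Q
  rank : Q → ℕ

namespace DPTA

variable {Alpha Q : Type}

/-- The state reached in one step from `q` reading letter `s` in direction `d`. -/
def next (M : DPTA Alpha Q) (q : Q) (s : Alpha) (d : Bool) : Q :=
  if d then (M.delta q s).2 else (M.delta q s).1

/-- The state of the run started in `q` on the tree `t` at the node `v`
(nodes are words over `{0,1}`, head = first direction from the root). -/
def runFrom (M : DPTA Alpha Q) : Q → (List Bool → Alpha) → List Bool → Q
  | q, _, [] => q
  | q, t, d :: v => runFrom M (M.next q (t []) d) (fun u => t (d :: u)) v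

/-- The state of the (unique) run of `M` on `t` at node `v`. -/
def run (M : DPTA Alpha Q) (t : List Bool → Alpha) (v : List Bool) : Q :=
  runFrom M M.init t v

/-- Parity acceptance: the largest value occurring infinitely often is even. -/
def ParityAccept (f : ℕ → ℕ) : Prop :=
  Even (sSup {r : ℕ | ∃ᶠ n in atTop, f n = r})

/-- The prefix of length `n` of an infinite path. -/
def pref (π : ℕ → Bool) (n : ℕ) : List Bool :=
  List.ofFn fun i : Fin n => π i

/-- The run of `M` on `t` started at state `q` is accepting. -/
def AcceptsFrom (M : DPTA Alpha Q) (q : Q) (t : List Bool → Alpha) : Prop :=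
  ∀ π : ℕ → Bool, ParityAccept fun n => M.rank (runFrom M q t (pref π n))

/-- The language recognised by `M`: trees with accepting run. -/
def Lang (M : DPTA Alpha Q) : Set (List Bool → Alpha) :=
  {t | M.AcceptsFrom M.init t}

/-- The state reached from `q` following a finite sequence of steps
(steps = letter together with direction). -/
def follow (M : DPTA Alpha Q) (q : Q) (steps : List (Alpha × Bool)) : Q :=
  steps.foldl (fun p s => M.next p s.1 s.2) q

/-- All states visited along a path (the starting state included). -/
def statesOn (M : DPTA Alpha Q) (q : Q) (steps : List (Alpha × Bool)) : List Q :=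
  List.scanl (fun p s => M.next p s.1 s.2) q steps

/-- The largest rank of a state visited along a path. -/
def maxRankOn (M : DPTA Alpha Q) (q : Q) (steps : List (Alpha × Bool)) : ℕ :=
  ((M.statesOn q steps).map M.rank).foldr max 0

/-- `steps` forms a loop at `q` (a path of positive length from `q` to `q`). -/
def IsLoop (M : DPTA Alpha Q) (q : Q) (steps : List (Alpha × Bool)) : Prop :=
  steps ≠ [] ∧ M.follow q steps = q

/-- `M` contains an `(i,k)`-flower: loops `lam i, …, lam k` at a common state `q`,
the largest rank on `lam j` has the parity of `j` and increases strictly with `j`. -/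
def HasFlower (M : DPTA Alpha Q) (i k : ℕ) : Prop :=
  ∃ (q : Q) (lam : ℕ → List (Alpha × Bool)),
    (∀ j, i ≤ j → j ≤ k → M.IsLoop q (lam j) ∧ M.maxRankOn q (lam j) % 2 = j % 2) ∧
    (∀ j, i ≤ j → j < k → M.maxRankOn q (lam j) < M.maxRankOn q (lam (j + 1)))

/-- `q` is reachable from the initial state. -/
def Reachable (M : DPTA Alpha Q) (q : Q) : Prop :=
  ∃ steps, M.follow M.init steps = q

/-- `q` is productive: it occurs in some accepting run of `M`. -/
def Productive (M : DPTA Alpha Q) (q : Q) : Prop :=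
  ∃ t ∈ M.Lang, ∃ v, M.run t v = q

/-- The transition from `q` reading `s` is used in some accepting run of `M`. -/
def ProductiveTrans (M : DPTA Alpha Q) (q : Q) (s : Alpha) : Prop :=
  ∃ t ∈ M.Lang, ∃ v, M.run t v = q ∧ t v = s

/-- `q` is all-rejecting: started from `q`, the automaton accepts no tree. -/
def AllRejecting (M : DPTA Alpha Q) (q : Q) : Prop :=
  ∀ t, ¬ M.AcceptsFrom q t

/-- `M` is normalized: every state is reachable, every state is productive except
possibly one all-rejecting state `⊥` with `δ(⊥,σ) = (⊥,⊥)`, and every transition is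
productive or of the form `δ(q,σ) = (⊥,⊥)`. -/
def Normalized (M : DPTA Alpha Q) : Prop :=
  (∀ q, M.Reachable q) ∧
  ∃ bot : Option Q,
    (∀ q, some q ≠ bot → M.Productive q) ∧
    (∀ q, some q = bot → M.AllRejecting q ∧ ∀ s, M.delta q s = (q, q)) ∧
    (∀ q s, M.ProductiveTrans q s ∨
      (some (M.delta q s).1 = bot ∧ some (M.delta q s).2 = bot))

end DPTA


/-- Wadge reducibility: `A ≤_W B` iff `A` is the preimage of `B` under a continuous map. -/
def WadgeLE {X Y : Type} [TopologicalSpace X] [TopologicalSpace Y]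
    (A : Set X) (B : Set Y) : Prop :=
  ∃ φ : X → Y, Continuous φ ∧ A = φ ⁻¹' B

/-- Analytic sets: the empty set and continuous images of the Baire space. -/
def IsAnalytic {X : Type} [TopologicalSpace X] (s : Set X) : Prop :=
  s = ∅ ∨ ∃ f : (ℕ → ℕ) → X, Continuous f ∧ Set.range f = s

/-- `Π¹₁` (coanalytic) sets: complements of analytic sets. -/
def IsPi11 {X : Type} [TopologicalSpace X] (s : Set X) : Prop :=
  IsAnalytic sᶜ

/-- The two-letter alphabet `{a, b}`. -/
inductive Ab16 : Type
  | a | b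
  deriving DecidableEq

instance : TopologicalSpace Ab16 := ⊥
instance : DiscreteTopology Ab16 := ⟨rfl⟩

/-- The states `{q₀, q₁, ⊤}`. -/
inductive St16 : Type
  | q0 | q1 | top
  deriving DecidableEq

/-- The automaton of Statement 16 (`C_{ω^{ω·3}+2}`): `rank q₀ = rank ⊤ = 0`,
`rank q₁ = 1`, `δ(q₀,a) = (q₀,q₁)`, `δ(q₀,b) = (⊤,⊤)`, `δ(q₁,a) = (q₀,⊤)`,
`δ(q₁,b) = (⊤,⊤)`, `δ(⊤,x) = (⊤,⊤)`. -/
def M16 : DPTA Ab16 St16 where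
  init := .q0
  delta := fun q s =>
    match q, s with
    | .q0, .a => (.q0, .q1)
    | .q0, .b => (.top, .top)
    | .q1, .a => (.q0, .top)
    | .q1, .b => (.top, .top)
    | .top, _ => (.top, .top)
  rank := fun q =>
    match q with
    | .q1 => 1
    | _ => 0

/-!
Along a branch labelled `a` throughout, the automaton moves `q₀ → q₀` to the left, `q₀ → q₁` to
the right and `q₁ → q₀` to the left; every other move, and every `b`, leads to the absorbing
state `⊤`. So a tree is rejected iff some branch is labelled `a` throughout, never turns right
twice in a row, and turns right infinitely often. These branches are exactly the codes
`0^{n₀} 1 0 0^{n₁} 1 0 ⋯` of the sequences `n : ℕ → ℕ`. Hence the complement of `L(A)` is the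
image of `ℕ^ℕ × T_Σ` under the continuous map relabelling by `a` the branch coded by `n`, an
analytic set.

Conversely, let `Aᶜ = g(ℕ^ℕ)` with `g` continuous. Label a node `v` by `a` iff the list `s` of
lengths of the blocks completed along `v` extends to some `y` with `g y` agreeing with `x`
below `|s|`. If `x = g y`, the code of `y` is a branch labelled `a` throughout. Conversely such a
branch is the code of some `n`, all finite prefixes of `n` are extendable, and `g n = x` by
continuity of `g`.
-/

open DPTA MeasureTheory Topology

namespace DPTA

variable {Alpha Q : Type}

theorem runFrom_append_singleton (M : DPTA Alpha Q) (q : Q) (t : List Bool → Alpha)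
    (v : List Bool) (d : Bool) :
    M.runFrom q t (v ++ [d]) = M.next (M.runFrom q t v) (t v) d := by
  induction v generalizing q t with
  | nil => rfl
  | cons e v ih => exact ih _ _

theorem length_pref (π : ℕ → Bool) (n : ℕ) : (pref π n).length = n :=
  List.length_ofFn

theorem pref_succ (π : ℕ → Bool) (n : ℕ) : pref π (n + 1) = pref π n ++ [π n] := by
  simp only [pref, List.ofFn_succ', List.concat_eq_append]
  rfl

theorem pref_add (π : ℕ → Bool) (a b : ℕ) :
    pref π (a + b) = pref π a ++ pref (fun i => π (a + i)) b := by
  simp [pref, List.ofFn_add]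

theorem pref_prefix_pref (π : ℕ → Bool) {m m' : ℕ} (h : m ≤ m') : pref π m <+: pref π m' := by
  obtain ⟨k, rfl⟩ := Nat.exists_eq_add_of_le h
  rw [pref_add]
  exact List.prefix_append _ _

theorem run_pref_succ (M : DPTA Alpha Q) (t : List Bool → Alpha) (π : ℕ → Bool) (n : ℕ) :
    M.run t (pref π (n + 1)) = M.next (M.run t (pref π n)) (t (pref π n)) (π n) := by
  rw [run, pref_succ, runFrom_append_singleton]
  rfl

theorem parityAccept_iff_not_frequently_eq_one {f : ℕ → ℕ} (hf : ∀ n, f n ≤ 1) :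
    ParityAccept f ↔ ¬∃ᶠ n in atTop, f n = 1 := by
  have hle : ∀ r ∈ {r | ∃ᶠ n in atTop, f n = r}, r ≤ 1 := fun r hr => by
    obtain ⟨n, rfl⟩ := hr.exists
    exact hf n
  by_cases h : ∃ᶠ n in atTop, f n = 1
  · rw [ParityAccept, IsGreatest.csSup_eq ⟨h, hle⟩]
    simp [h]
  · rw [ParityAccept, Nat.le_zero.1 (csSup_le' fun r hr => ?_)]
    · simp [h]
    · have := hle r hr
      have : r ≠ 1 := by rintro rfl; exact h hr
      omega

end DPTA

def IsBlockPath (π : ℕ → Bool) : Prop :=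
  (∀ i, π i = true → π (i + 1) = false) ∧ ∃ᶠ i in atTop, π i = true

namespace M16

theorem next_top (x : Ab16) (d : Bool) : M16.next .top x d = .top := by
  cases x <;> cases d <;> rfl

theorem next_b (q : St16) (d : Bool) : M16.next q .b d = .top := by
  cases q <;> cases d <;> rfl

theorem next_true_of_ne_q0 {q : St16} (hq : q ≠ .q0) (x : Ab16) : M16.next q x true = .top := by
  cases q <;> cases x <;> first | rfl | exact absurd rfl hq

theorem next_false_ne_q1 (q : St16) (x : Ab16) : M16.next q x false ≠ .q1 := by
  cases q <;> cases x <;> decide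

theorem rank_le_one (q : St16) : M16.rank q ≤ 1 := by
  cases q <;> decide

theorem rank_eq_one_iff (q : St16) : M16.rank q = 1 ↔ q = .q1 := by
  cases q <;> decide

theorem run_pref_eq_top_of_le {t : List Bool → Ab16} {π : ℕ → Bool} {m k : ℕ}
    (h : M16.run t (pref π m) = .top) (hk : m ≤ k) : M16.run t (pref π k) = .top :=
  Nat.le_induction h (fun k _ ih => by rw [run_pref_succ, ih, next_top]) k hk

theorem isBlockPath_of_frequently_run_eq_q1 {t : List Bool → Ab16} {π : ℕ → Bool}
    (hfreq : ∃ᶠ m in atTop, M16.run t (pref π m) = .q1) :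
    IsBlockPath π ∧ ∀ m, t (pref π m) = .a := by
  have hnotop : ∀ m, M16.run t (pref π m) ≠ .top := fun m hm => by
    obtain ⟨k, hk, hq1⟩ := frequently_atTop.1 hfreq m
    rw [run_pref_eq_top_of_le hm hk] at hq1
    cases hq1
  have hlab : ∀ m, t (pref π m) = .a := fun m => by
    cases hx : t (pref π m)
    · rfl
    · exact absurd (by rw [run_pref_succ, hx, next_b]) (hnotop (m + 1))
  have hq0 : ∀ m, π m = true → M16.run t (pref π m) = .q0 := fun m hm => by
    by_contra hne
    exact hnotop (m + 1) (by rw [run_pref_succ, hm, next_true_of_ne_q0 hne])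
  refine ⟨⟨fun m hm => ?_, ?_⟩, hlab⟩
  · by_contra h
    have h1 := hq0 (m + 1) (by simpa using h)
    rw [run_pref_succ, hq0 m hm, hlab, hm] at h1
    cases h1
  · refine (tendsto_sub_atTop_nat 1).frequently (hfreq.mono fun m hm => ?_)
    obtain _ | m := m
    · cases hm
    · by_contra h
      rw [run_pref_succ, show π m = false by simpa using h] at hm
      exact next_false_ne_q1 _ _ hm

theorem frequently_run_eq_q1_of_isBlockPath {t : List Bool → Ab16} {π : ℕ → Bool}
    (hπ : IsBlockPath π) (hlab : ∀ m, t (pref π m) = .a) :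
    ∃ᶠ m in atTop, M16.run t (pref π m) = .q1 := by
  have hinv : ∀ m, M16.run t (pref π m) = .q0 ∨ (M16.run t (pref π m) = .q1 ∧ π m = false) := by
    intro m
    induction m with
    | zero => exact Or.inl rfl
    | succ m ih =>
      rw [run_pref_succ, hlab]
      rcases ih with h | ⟨h, hπm⟩
      · cases hπm : π m
        · exact Or.inl (by rw [h]; rfl)
        · exact Or.inr ⟨by rw [h]; rfl, hπ.1 m hπm⟩
      · exact Or.inl (by rw [h, hπm]; rfl)
  refine (tendsto_add_atTop_nat 1).frequently (hπ.2.mono fun m hm => ?_)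
  have h0 : M16.run t (pref π m) = .q0 := (hinv m).resolve_right fun h => by simp [h.2] at hm
  rw [run_pref_succ, h0, hlab, hm]
  rfl

theorem frequently_run_eq_q1_iff (t : List Bool → Ab16) (π : ℕ → Bool) :
    (∃ᶠ m in atTop, M16.run t (pref π m) = .q1) ↔ IsBlockPath π ∧ ∀ m, t (pref π m) = .a :=
  ⟨isBlockPath_of_frequently_run_eq_q1, fun h => frequently_run_eq_q1_of_isBlockPath h.1 h.2⟩

theorem mem_lang_iff (t : List Bool → Ab16) :
    t ∈ M16.Lang ↔ ¬∃ π, IsBlockPath π ∧ ∀ m, t (pref π m) = .a := by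
  simp only [not_exists, ← frequently_run_eq_q1_iff]
  refine forall_congr' fun π => ?_
  rw [parityAccept_iff_not_frequently_eq_one fun _ => rank_le_one _]
  simp only [rank_eq_one_iff]
  rfl

theorem const_b_mem_lang : (fun _ => Ab16.b) ∈ M16.Lang := by
  rw [mem_lang_iff]
  rintro ⟨π, -, h⟩
  cases h 0

end M16

namespace BlockCode

def blockWord (j : ℕ) : List Bool := List.replicate j false ++ [true, false]

/-- The branch `0^{n 0} 1 0 0^{n 1} 1 0 ⋯`. -/
def code (n : ℕ → ℕ) (i : ℕ) : Bool :=
  if i < n 0 then false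
  else if i = n 0 then true
  else if i = n 0 + 1 then false
  else code (fun k => n (k + 1)) (i - (n 0 + 2))
termination_by i
decreasing_by omega

theorem code_of_lt {n : ℕ → ℕ} {i : ℕ} (h : i < n 0) : code n i = false := by
  rw [code, if_pos h]

theorem code_self (n : ℕ → ℕ) : code n (n 0) = true := by
  rw [code]
  simp

theorem code_self_add_one (n : ℕ → ℕ) : code n (n 0 + 1) = false := by
  rw [code]
  simp

theorem code_add (n : ℕ → ℕ) (i : ℕ) : code n (n 0 + 2 + i) = code (fun k => n (k + 1)) i := by
  rw [code, if_neg (by omega), if_neg (by omega), if_neg (by omega)]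
  congr 1
  omega

theorem pref_code (n : ℕ → ℕ) : pref (code n) (n 0 + 2) = blockWord (n 0) := by
  have hfalse : pref (code n) (n 0) = List.replicate (n 0) false :=
    List.eq_replicate_iff.2 ⟨length_pref _ _, fun b hb => by
      obtain ⟨i, rfl⟩ := List.mem_ofFn.1 hb
      exact code_of_lt i.2⟩
  rw [pref_add, hfalse, blockWord]
  simp [pref, List.ofFn_succ, code_self, code_self_add_one]

theorem pref_code_add (n : ℕ → ℕ) (m : ℕ) :
    pref (code n) (n 0 + 2 + m) = blockWord (n 0) ++ pref (code fun k => n (k + 1)) m := by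
  rw [pref_add, pref_code]
  simp only [code_add]

theorem isBlockPath_code (n : ℕ → ℕ) : IsBlockPath (code n) := by
  refine ⟨fun i hi => ?_, frequently_atTop.2 fun N => ?_⟩
  · induction i using Nat.strong_induction_on generalizing n with
    | _ i ih =>
    rcases Nat.lt_or_ge i (n 0 + 2) with h | h
    · obtain h | rfl | rfl : i < n 0 ∨ i = n 0 ∨ i = n 0 + 1 := by omega
      · rw [code_of_lt h] at hi
        cases hi
      · exact code_self_add_one n
      · rw [code_self_add_one] at hi
        cases hi
    · obtain ⟨j, rfl⟩ := Nat.exists_eq_add_of_le h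
      rw [code_add] at hi
      rw [add_assoc, code_add]
      exact ih j (by omega) _ hi
  · induction N generalizing n with
    | zero => exact ⟨n 0, Nat.zero_le _, code_self n⟩
    | succ N ih =>
      obtain ⟨i, hi, h⟩ := ih fun k => n (k + 1)
      exact ⟨n 0 + 2 + i, by omega, by rwa [code_add]⟩

theorem code_congr {n n' : ℕ → ℕ} {i : ℕ} (h : ∀ j ≤ i, n j = n' j) : code n i = code n' i := by
  induction i using Nat.strong_induction_on generalizing n n' with
  | _ i ih =>
  rw [code, code.eq_def n', h 0 (Nat.zero_le _)]
  split_ifs <;> first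
    | rfl
    | exact ih (i - (n' 0 + 2)) (by omega) fun j hj => h (j + 1) (by omega)

theorem eventually_pref_code_eq (n : ℕ → ℕ) (m : ℕ) :
    ∀ᶠ n' in 𝓝 n, pref (code n') m = pref (code n) m := by
  filter_upwards [(PiNat.isOpen_cylinder _ n m).mem_nhds (PiNat.self_mem_cylinder n m)] with n' hn'
  simp only [pref]
  congr 1
  funext i
  exact code_congr fun j hj => PiNat.mem_cylinder_iff.1 hn' j (by omega)

noncomputable def firstTrue (σ : ℕ → Bool) : ℕ := sInf {i | σ i = true}

noncomputable def dropBlock (σ : ℕ → Bool) (i : ℕ) : Bool := σ (firstTrue σ + 2 + i)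

noncomputable def decode : (ℕ → Bool) → ℕ → ℕ
  | σ, 0 => firstTrue σ
  | σ, k + 1 => decode (dropBlock σ) k

theorem isBlockPath_dropBlock {σ : ℕ → Bool} (h : IsBlockPath σ) : IsBlockPath (dropBlock σ) := by
  refine ⟨fun i hi => h.1 _ hi, frequently_atTop.2 fun N => ?_⟩
  obtain ⟨i, hi, hσ⟩ := frequently_atTop.1 h.2 (firstTrue σ + 2 + N)
  refine ⟨i - (firstTrue σ + 2), by omega, ?_⟩
  rwa [dropBlock, Nat.add_sub_cancel' (by omega)]

theorem code_decode {σ : ℕ → Bool} (h : IsBlockPath σ) : code (decode σ) = σ := by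
  funext i
  induction i using Nat.strong_induction_on generalizing σ with
  | _ i ih =>
  have hfirst : σ (firstTrue σ) = true := Nat.sInf_mem h.2.exists
  change code (decode σ) i = σ i
  rcases Nat.lt_or_ge i (firstTrue σ + 2) with hi | hi
  · obtain hi | rfl | rfl : i < firstTrue σ ∨ i = firstTrue σ ∨ i = firstTrue σ + 1 := by omega
    · rw [code_of_lt hi]
      exact (Bool.eq_false_iff.2 (Nat.notMem_of_lt_sInf hi)).symm
    · exact (code_self _).trans hfirst.symm
    · exact (code_self_add_one _).trans (h.1 _ hfirst).symm
  · obtain ⟨j, rfl⟩ := Nat.exists_eq_add_of_le hi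
    exact (code_add _ j).trans (ih j (by omega) (isBlockPath_dropBlock h))

theorem range_code : Set.range code = {π | IsBlockPath π} :=
  Set.ext fun π => ⟨by rintro ⟨n, rfl⟩; exact isBlockPath_code n, fun h => ⟨decode π, code_decode h⟩⟩

/-- A block counts as completed as soon as its `true` is read: the `false` after it is forced. -/
def blockLengths : List Bool → List ℕ
  | [] => []
  | false :: w => (blockLengths w).modifyHead (· + 1)
  | [true] => [0]
  | true :: _ :: w => 0 :: blockLengths w

theorem blockLengths_blockWord_append (j : ℕ) (w : List Bool) :
    blockLengths (blockWord j ++ w) = j :: blockLengths w := by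
  induction j with
  | zero => rfl
  | succ j ih =>
    change (blockLengths (blockWord j ++ w)).modifyHead _ = _
    rw [ih]
    rfl

theorem blockLengths_of_prefix_blockWord {w : List Bool} {j : ℕ} (h : w <+: blockWord j) :
    blockLengths w = [] ∨ blockLengths w = [j] := by
  induction j generalizing w with
  | zero =>
    obtain rfl | rfl | rfl : w = [] ∨ w = [true] ∨ w = [true, false] := by
      simpa [blockWord, List.inits] using (List.mem_inits _ _).2 h
    all_goals simp [blockLengths]
  | succ j ih =>
    change w <+: false :: blockWord j at h
    rcases List.prefix_cons_iff.1 h with rfl | ⟨w, rfl, hw⟩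
    · exact Or.inl rfl
    · rcases ih hw with h | h <;> simp [blockLengths, h]

theorem exists_ofFn_eq_blockLengths_pref_code (n : ℕ → ℕ) (m : ℕ) :
    ∃ k, List.ofFn (fun i : Fin k => n i) = blockLengths (pref (code n) m) := by
  induction m using Nat.strong_induction_on generalizing n with
  | _ m ih =>
  by_cases hm : m ≤ n 0 + 2
  · have hw : pref (code n) m <+: blockWord (n 0) := pref_code n ▸ pref_prefix_pref _ hm
    rcases blockLengths_of_prefix_blockWord hw with h | h
    · exact ⟨0, by simp [h]⟩
    · exact ⟨1, by simp [h]⟩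
  · obtain ⟨m, rfl⟩ : ∃ m', m = n 0 + 2 + m' := ⟨m - (n 0 + 2), by omega⟩
    obtain ⟨k, hk⟩ := ih m (by omega) fun k => n (k + 1)
    exact ⟨k + 1, by rw [pref_code_add, blockLengths_blockWord_append, ← hk, List.ofFn_succ]; rfl⟩

theorem exists_blockLengths_pref_code_eq_ofFn (n : ℕ → ℕ) (k : ℕ) :
    ∃ m, blockLengths (pref (code n) m) = List.ofFn fun i : Fin k => n i := by
  induction k generalizing n with
  | zero => exact ⟨0, rfl⟩
  | succ k ih =>
    obtain ⟨m, hm⟩ := ih fun k => n (k + 1)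
    exact ⟨n 0 + 2 + m, by rw [pref_code_add, blockLengths_blockWord_append, hm, List.ofFn_succ]; rfl⟩

end BlockCode

theorem continuous_of_forall_lt_eq {E : ℕ → Type*} [∀ n, TopologicalSpace (E n)]
    [∀ n, DiscreteTopology (E n)] {Y : Type*} [TopologicalSpace Y] {f : (∀ n, E n) → Y} (N : ℕ)
    (h : ∀ x y, (∀ i < N, x i = y i) → f x = f y) : Continuous f :=
  continuous_iff_continuousAt.2 fun x => continuousAt_const.congr <|
    Filter.mem_of_superset ((PiNat.isOpen_cylinder E x N).mem_nhds (PiNat.self_mem_cylinder x N))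
      fun y hy => h x y fun i hi => (PiNat.mem_cylinder_iff.1 hy i hi).symm

theorem Continuous.eq_of_forall_exists_eq_lt {α β : Type*} [TopologicalSpace α]
    [DiscreteTopology α] [TopologicalSpace β] [DiscreteTopology β] {g : (ℕ → α) → ℕ → β}
    (hg : Continuous g) {y : ℕ → α} {x : ℕ → β}
    (h : ∀ k, ∃ z, (∀ i < k, z i = y i) ∧ ∀ i < k, g z i = x i) : g y = x := by
  funext m
  have hU : {z | g z m = g y m} ∈ 𝓝 y :=
    ((isOpen_discrete {g y m}).preimage ((continuous_apply m).comp hg)).mem_nhds rfl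
  obtain ⟨_, ⟨w, K, rfl⟩, hyw, hsub⟩ := (PiNat.isTopologicalBasis_cylinders _).mem_nhds_iff.1 hU
  rw [← PiNat.mem_cylinder_iff_eq.1 hyw] at hsub
  obtain ⟨z, hzy, hzx⟩ := h (max K (m + 1))
  rw [← hsub (PiNat.mem_cylinder_iff.2 fun i hi => hzy i (by omega)), hzx m (by omega)]

instance : Finite Ab16 :=
  Finite.of_surjective (fun b : Bool => if b then Ab16.a else Ab16.b) fun x => by
    cases x
    exacts [⟨true, rfl⟩, ⟨false, rfl⟩]

instance : PolishSpace (List Bool → Ab16) := {}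

namespace M16

open BlockCode

def relabelCodePath (p : (ℕ → ℕ) × (List Bool → Ab16)) (v : List Bool) : Ab16 :=
  if pref (code p.1) v.length = v then .a else p.2 v

theorem continuous_relabelCodePath : Continuous relabelCodePath := by
  refine continuous_pi fun v => continuous_iff_continuousAt.2 fun p => ?_
  have hev : ∀ᶠ p' in 𝓝 p, pref (code p'.1) v.length = pref (code p.1) v.length :=
    (continuous_fst.tendsto p).eventually (eventually_pref_code_eq p.1 v.length)
  by_cases hv : pref (code p.1) v.length = v
  · exact (continuousAt_const (y := Ab16.a)).congr
      (hev.mono fun p' h => by simp [relabelCodePath, h, hv])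
  · exact ((continuous_apply v).comp continuous_snd).continuousAt.congr
      (hev.mono fun p' h => by simp [relabelCodePath, h, hv])

theorem range_relabelCodePath : Set.range relabelCodePath = M16.Langᶜ := by
  ext t
  rw [Set.mem_compl_iff, mem_lang_iff, not_not, Set.mem_range]
  constructor
  · rintro ⟨p, rfl⟩
    exact ⟨code p.1, isBlockPath_code p.1, fun m => by simp [relabelCodePath, length_pref]⟩
  · rintro ⟨π, hπ, hlab⟩
    obtain ⟨n, rfl⟩ : π ∈ Set.range code := range_code ▸ hπ
    refine ⟨(n, t), funext fun v => ?_⟩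
    simp only [relabelCodePath]
    split_ifs with hv
    · rw [← hv, hlab]
    · rfl

theorem isPi11_lang : IsPi11 M16.Lang := by
  have h := analyticSet_range_of_polishSpace continuous_relabelCodePath
  rw [range_relabelCodePath, AnalyticSet] at h
  exact h

def Extendable {β : Type*} (g : (ℕ → ℕ) → ℕ → β) (x : ℕ → β) (s : List ℕ) : Prop :=
  ∃ y : ℕ → ℕ, (∀ i (hi : i < s.length), y i = s[i]) ∧ ∀ i < s.length, g y i = x i

open Classical in
noncomputable def reductionTree {β : Type*} (g : (ℕ → ℕ) → ℕ → β) (x : ℕ → β) (v : List Bool) :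
    Ab16 :=
  if Extendable g x (blockLengths v) then .a else .b

theorem continuous_reductionTree {β : Type*} [TopologicalSpace β] [DiscreteTopology β]
    (g : (ℕ → ℕ) → ℕ → β) : Continuous (reductionTree g) := by
  refine continuous_pi fun v => continuous_of_forall_lt_eq (blockLengths v).length fun x x' h => ?_
  have : Extendable g x (blockLengths v) ↔ Extendable g x' (blockLengths v) :=
    exists_congr fun y => and_congr_right fun _ => forall₂_congr fun i hi => by rw [h i hi]
  classical
  exact if_congr this rfl rfl

theorem reductionTree_mem_lang_iff {β : Type*} [TopologicalSpace β] [DiscreteTopology β]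
    {g : (ℕ → ℕ) → ℕ → β} (hg : Continuous g) (x : ℕ → β) :
    reductionTree g x ∈ M16.Lang ↔ x ∉ Set.range g := by
  rw [mem_lang_iff, not_iff_not]
  constructor
  · rintro ⟨π, hπ, hlab⟩
    obtain ⟨n, rfl⟩ : π ∈ Set.range code := range_code ▸ hπ
    refine ⟨n, hg.eq_of_forall_exists_eq_lt fun k => ?_⟩
    obtain ⟨m, hm⟩ := exists_blockLengths_pref_code_eq_ofFn n k
    have hext : Extendable g x (blockLengths (pref (code n) m)) := by
      by_contra hc
      have := hlab m
      simp only [reductionTree, if_neg hc] at this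
      cases this
    obtain ⟨y, hy, hgy⟩ := hm ▸ hext
    exact ⟨y, fun i hi => (hy i (by simpa using hi)).trans (List.getElem_ofFn _),
      fun i hi => hgy i (by simpa using hi)⟩
  · rintro ⟨y, rfl⟩
    refine ⟨code y, isBlockPath_code y, fun m => ?_⟩
    obtain ⟨k, hk⟩ := exists_ofFn_eq_blockLengths_pref_code y m
    rw [reductionTree, if_pos]
    exact ⟨y, by simp [← hk], fun _ _ => rfl⟩

end M16

/-- `L(M16)` is `Π¹₁`-complete. -/
theorem M16_pi11_complete :
    IsPi11 M16.Lang ∧ ∀ A : Set (ℕ → Bool), IsPi11 A → WadgeLE A M16.Lang := by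
  refine ⟨M16.isPi11_lang, fun A hA => ?_⟩
  rcases hA with hA | ⟨g, hg, hgA⟩
  · refine ⟨fun _ _ => .b, continuous_const, ?_⟩
    rw [← compl_compl A, hA, Set.compl_empty, Set.preimage_const_of_mem M16.const_b_mem_lang]
  · refine ⟨M16.reductionTree g, M16.continuous_reductionTree g, ?_⟩
    ext x
    rw [Set.mem_preimage, M16.reductionTree_mem_lang_iff hg, hgA, Set.mem_compl_iff, not_not]
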